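/- Let X_n have continuous density p_n with interval support contained in ℝ and score ρ_n = p_n'/p_n, and let Z be standard Gaussian with cdf Φ and pdf φ. Assume p_n/φ → 0 at both endpoints of the support of p_n (so that the boundary term κ₁* vanishes). Then for every z ∈ ℝ, P(X_n ≤ z) − Φ(z) = −E[ (X_n + ρ_n(X_n)) · Φ(X_n ∧ z)(1 − Φ(X_n ∨ z))/φ(X_n) ]. -/

import Mathlib

open Real MeasureTheory Set Filter

/-- Standard Gaussian pdf. -/
noncomputable def gaussPdf (x : ℝ) : ℝ := (Real.sqrt (2 * π))⁻¹ * Real.exp (-x ^ 2 / 2)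

/-- Standard Gaussian cdf. -/
noncomputable def gaussCdf (x : ℝ) : ℝ := ∫ u in Set.Iic x, gaussPdf u

/-!
With `v = p / φ`, the Gaussian identity `φ' = -x φ` gives `v' = (x + ρ) p / φ`, so the integrand is
`K(x) v'(x)` with `K(x) = Φ(x ∧ z)(1 - Φ(x ∨ z))`. Integrating by parts on `(-∞, z]` and on
`(z, ∞)` — the boundary terms at `±∞` vanish because `K` is bounded and `v → 0`, and those at `z`
cancel — leaves `-(1 - Φ(z)) P(X ≤ z) + Φ(z) P(X > z) = Φ(z) - P(X ≤ z)`.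
-/

open Topology

lemma gaussPdf_eq_gaussianPDFReal : gaussPdf = ProbabilityTheory.gaussianPDFReal 0 1 := by
  funext x
  simp [gaussPdf, ProbabilityTheory.gaussianPDFReal]

lemma gaussPdf_pos (x : ℝ) : 0 < gaussPdf x :=
  mul_pos (inv_pos.2 (Real.sqrt_pos.2 (by positivity))) (Real.exp_pos _)

lemma integrable_gaussPdf : Integrable gaussPdf := by
  rw [gaussPdf_eq_gaussianPDFReal]
  exact ProbabilityTheory.integrable_gaussianPDFReal 0 1

lemma integral_gaussPdf : ∫ x, gaussPdf x = 1 := by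
  rw [gaussPdf_eq_gaussianPDFReal]
  exact ProbabilityTheory.integral_gaussianPDFReal_eq_one 0 one_ne_zero

lemma continuous_gaussPdf : Continuous gaussPdf := by
  unfold gaussPdf
  fun_prop

lemma hasDerivAt_gaussPdf (x : ℝ) : HasDerivAt gaussPdf (-x * gaussPdf x) x := by
  have hexp : HasDerivAt (fun y : ℝ => -y ^ 2 / 2) (-x) x := by
    refine ((hasDerivAt_pow 2 x).neg.div_const 2).congr_deriv ?_
    ring
  refine (hexp.exp.const_mul (Real.sqrt (2 * π))⁻¹).congr_deriv ?_
  unfold gaussPdf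
  ring

lemma hasDerivAt_gaussCdf (x : ℝ) : HasDerivAt gaussCdf (gaussPdf x) x := by
  have hcdf : gaussCdf = fun y => gaussCdf 0 + ∫ t in (0 : ℝ)..y, gaussPdf t := by
    funext y
    rw [← intervalIntegral.integral_Iic_sub_Iic integrable_gaussPdf.integrableOn
      integrable_gaussPdf.integrableOn]
    simp only [gaussCdf, add_sub_cancel]
  rw [hcdf]
  exact (intervalIntegral.integral_hasDerivAt_right integrable_gaussPdf.intervalIntegrable
    (continuous_gaussPdf.stronglyMeasurableAtFilter _ _)
    continuous_gaussPdf.continuousAt).const_add _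

lemma abs_gaussCdf_le_one (x : ℝ) : |gaussCdf x| ≤ 1 := by
  have hnonneg : 0 ≤ gaussCdf x :=
    setIntegral_nonneg measurableSet_Iic fun y _ => (gaussPdf_pos y).le
  have hle : gaussCdf x ≤ 1 := by
    rw [← integral_gaussPdf]
    exact setIntegral_le_integral integrable_gaussPdf
      (Eventually.of_forall fun y => (gaussPdf_pos y).le)
  exact abs_le.2 ⟨by linarith, hle⟩

lemma hasDerivAt_div_gaussPdf {p : ℝ → ℝ} {p' x : ℝ} (hp : HasDerivAt p p' x) :
    HasDerivAt (fun y => p y / gaussPdf y) ((p' + x * p x) / gaussPdf x) x := by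
  have hφ := (gaussPdf_pos x).ne'
  refine (hp.div (hasDerivAt_gaussPdf x) hφ).congr_deriv ?_
  field_simp
  ring

section IntegrationByParts

variable {u u' v v' : ℝ → ℝ}

lemma integral_Iic_mul_deriv_of_tendsto_atBot_zero (a : ℝ)
    (hu : ∀ x, HasDerivAt u (u' x) x) (hv : ∀ x, HasDerivAt v (v' x) x)
    (hub : IsBoundedUnder (· ≤ ·) atBot (‖u ·‖)) (hbot : Tendsto v atBot (𝓝 0))
    (huv' : IntegrableOn (u * v') (Iic a)) (hu'v : IntegrableOn (u' * v) (Iic a)) :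
    ∫ x in Iic a, u x * v' x = u a * v a - ∫ x in Iic a, u' x * v x := by
  have hcont : ContinuousAt (u * v) a :=
    (hu a).continuousAt.mul (hv a).continuousAt
  have hlim : Tendsto (fun x => u x * v x) atBot (𝓝 0) := by
    simpa only [mul_comm (v _)] using hbot.zero_mul_isBoundedUnder_le hub
  simpa using integral_Iic_mul_deriv_eq_deriv_mul (fun x _ => hu x) (fun x _ => hv x)
    huv' hu'v hcont.continuousWithinAt hlim

lemma integral_Ioi_mul_deriv_of_tendsto_atTop_zero (a : ℝ)
    (hu : ∀ x, HasDerivAt u (u' x) x) (hv : ∀ x, HasDerivAt v (v' x) x)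
    (hub : IsBoundedUnder (· ≤ ·) atTop (‖u ·‖)) (htop : Tendsto v atTop (𝓝 0))
    (huv' : IntegrableOn (u * v') (Ioi a)) (hu'v : IntegrableOn (u' * v) (Ioi a)) :
    ∫ x in Ioi a, u x * v' x = -(u a * v a) - ∫ x in Ioi a, u' x * v x := by
  have hcont : ContinuousAt (u * v) a :=
    (hu a).continuousAt.mul (hv a).continuousAt
  have hlim : Tendsto (fun x => u x * v x) atTop (𝓝 0) := by
    simpa only [mul_comm (v _)] using htop.zero_mul_isBoundedUnder_le hub
  simpa using integral_Ioi_mul_deriv_eq_deriv_mul (fun x _ => hu x) (fun x _ => hv x)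
    huv' hu'v hcont.continuousWithinAt hlim

end IntegrationByParts

def cdfKernel (F : ℝ → ℝ) (z x : ℝ) : ℝ := F (min x z) * (1 - F (max x z))

lemma cdfKernel_of_le {F : ℝ → ℝ} {z x : ℝ} (h : x ≤ z) : cdfKernel F z x = F x * (1 - F z) := by
  rw [cdfKernel, min_eq_left h, max_eq_right h]

lemma cdfKernel_of_ge {F : ℝ → ℝ} {z x : ℝ} (h : z ≤ x) : cdfKernel F z x = F z * (1 - F x) := by
  rw [cdfKernel, min_eq_right h, max_eq_left h]

lemma integral_cdfKernel_mul_deriv {G g v v' : ℝ → ℝ} {C : ℝ} (z : ℝ)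
    (hG : ∀ x, HasDerivAt G (g x) x) (hGC : ∀ x, |G x| ≤ C)
    (hv : ∀ x, HasDerivAt v (v' x) x)
    (hbot : Tendsto v atBot (𝓝 0)) (htop : Tendsto v atTop (𝓝 0))
    (hgv : Integrable fun x => g x * v x)
    (hK : Integrable fun x => cdfKernel G z x * v' x) :
    ∫ x, cdfKernel G z x * v' x = G z * (∫ x, g x * v x) - ∫ x in Iic z, g x * v x := by
  have hleft : ∫ x in Iic z, cdfKernel G z x * v' x
      = G z * (1 - G z) * v z - (1 - G z) * ∫ x in Iic z, g x * v x := by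
    have hEq : EqOn (fun x => cdfKernel G z x * v' x) (fun x => G x * (1 - G z) * v' x) (Iic z) :=
      fun x hx => by simp only [cdfKernel_of_le hx]
    rw [setIntegral_congr_fun measurableSet_Iic hEq,
      integral_Iic_mul_deriv_of_tendsto_atBot_zero (u := fun x => G x * (1 - G z)) z
        (fun x => (hG x).mul_const _) hv ?bdd hbot
        ((hK.integrableOn).congr_fun hEq measurableSet_Iic) ?int]
    · simp only [mul_comm (g _) (1 - G z), mul_assoc, integral_const_mul]
    case bdd =>
      refine isBoundedUnder_of ⟨C * |1 - G z|, fun x => ?_⟩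
      simp only [norm_mul, Real.norm_eq_abs]
      exact mul_le_mul_of_nonneg_right (hGC x) (abs_nonneg _)
    case int =>
      refine (hgv.mul_const (1 - G z)).integrableOn.congr_fun (fun x _ => ?_) measurableSet_Iic
      simp only [Pi.mul_apply]
      ring
  have hright : ∫ x in Ioi z, cdfKernel G z x * v' x
      = -(G z * (1 - G z) * v z) + G z * ∫ x in Ioi z, g x * v x := by
    have hEq : EqOn (fun x => cdfKernel G z x * v' x) (fun x => G z * (1 - G x) * v' x) (Ioi z) :=
      fun x hx => by simp only [cdfKernel_of_ge (le_of_lt hx)]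
    rw [setIntegral_congr_fun measurableSet_Ioi hEq,
      integral_Ioi_mul_deriv_of_tendsto_atTop_zero (u := fun x => G z * (1 - G x)) z
        (fun x => ((hG x).const_sub 1).const_mul _) hv ?bdd htop
        ((hK.integrableOn).congr_fun hEq measurableSet_Ioi) ?int]
    · simp only [mul_neg, neg_mul, integral_neg, mul_assoc, integral_const_mul, sub_neg_eq_add]
    case bdd =>
      refine isBoundedUnder_of ⟨|G z| * (1 + C), fun x => ?_⟩
      simp only [norm_mul, Real.norm_eq_abs]
      exact mul_le_mul_of_nonneg_left ((abs_sub _ _).trans (by simp [hGC x])) (abs_nonneg _)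
    case int =>
      refine (hgv.mul_const (-G z)).integrableOn.congr_fun (fun x _ => ?_) measurableSet_Ioi
      simp only [Pi.mul_apply]
      ring
  have hsplit : (∫ x in Iic z, g x * v x) + ∫ x in Ioi z, g x * v x = ∫ x, g x * v x :=
    intervalIntegral.integral_Iic_add_Ioi hgv.integrableOn hgv.integrableOn
  rw [← intervalIntegral.integral_Iic_add_Ioi hK.integrableOn hK.integrableOn, hleft, hright]
  linear_combination G z * hsplit

theorem stmt15_general (p : ℝ → ℝ) (hpos : ∀ x, 0 < p x)
    (hmass : ∫ x, p x = 1)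
    (hdiff : ∀ x, DifferentiableAt ℝ p x)
    (hbot : Tendsto (fun x => p x / gaussPdf x) atBot (nhds 0))
    (htop : Tendsto (fun x => p x / gaussPdf x) atTop (nhds 0))
    (hInt : ∀ z : ℝ, Integrable (fun x =>
      (x + deriv p x / p x) *
        (gaussCdf (min x z) * (1 - gaussCdf (max x z)) / gaussPdf x) * p x)) :
    ∀ z : ℝ,
      (∫ x in Set.Iic z, p x) - gaussCdf z =
        -∫ x, (x + deriv p x / p x) *
          (gaussCdf (min x z) * (1 - gaussCdf (max x z)) / gaussPdf x) * p x := by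
  intro z
  have hintegrand : (fun x => (x + deriv p x / p x) *
        (gaussCdf (min x z) * (1 - gaussCdf (max x z)) / gaussPdf x) * p x)
      = fun x => cdfKernel gaussCdf z x * ((deriv p x + x * p x) / gaussPdf x) := by
    funext x
    have := (hpos x).ne'
    simp only [cdfKernel]
    field_simp
    ring
  have hdensity (x : ℝ) : gaussPdf x * (p x / gaussPdf x) = p x :=
    mul_div_cancel₀ _ (gaussPdf_pos x).ne'
  have hp : Integrable p := Integrable.of_integral_ne_zero (by simp [hmass])
  have key := integral_cdfKernel_mul_deriv z hasDerivAt_gaussCdf abs_gaussCdf_le_one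
    (fun x => hasDerivAt_div_gaussPdf (hdiff x).hasDerivAt) hbot htop
    (by simpa only [hdensity] using hp) (hintegrand ▸ hInt z)
  simp only [hdensity, hmass] at key
  rw [hintegrand, key]
  ring

/-- Exact representation of the difference of cdfs against a standard Gaussian:
if `X_n` has density `p` with score `ρ = p'/p` and the boundary terms vanish
(`p/φ → 0` at both endpoints of the support), then for all `z`,
`P(X_n ≤ z) - Φ(z) = -E[(X_n + ρ(X_n)) Φ(X_n∧z)(1-Φ(X_n∨z))/φ(X_n)]`. -/
theorem stmt15 (p : ℝ → ℝ) (hmeas : Measurable p) (hpos : ∀ x, 0 < p x)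
    (hmass : ∫ x, p x = 1)
    (hdiff : ∀ x, DifferentiableAt ℝ p x)
    (hbot : Tendsto (fun x => p x / gaussPdf x) atBot (nhds 0))
    (htop : Tendsto (fun x => p x / gaussPdf x) atTop (nhds 0))
    (hInt : ∀ z : ℝ, Integrable (fun x =>
      (x + deriv p x / p x) *
        (gaussCdf (min x z) * (1 - gaussCdf (max x z)) / gaussPdf x) * p x)) :
    ∀ z : ℝ,
      (∫ x in Set.Iic z, p x) - gaussCdf z =
        -∫ x, (x + deriv p x / p x) *
          (gaussCdf (min x z) * (1 - gaussCdf (max x z)) / gaussPdf x) * p x :=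
  stmt15_general p hpos hmass hdiff hbot htop hInt
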